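/- arXiv:0807.0222 — 2 statements merged into one kernel-verified Lean document; each statement's English description precedes it below -/
import Mathlib

section
/- If X is a u-sorted array with witness list L_X and Y is a u-sorted array with witness list L_Y, then there exists a permutation Z of the multiset X ∪ Y together with a list L_Z ⊆ L_X ∪ L_Y such that Z is u-sorted with witness L_Z. -/
/-!
Sort `X ++ Y` into `Z`. An order-convex run of values avoiding `LX ++ LY` contains at most
`|X|/u` elements of `X` and at most `|Y|/u` elements of `Y`, so `LX ++ LY` would be a witness
list for `Z`, were it not for its up to `40u` elements. Cut the ranks in `Z` into `u` blocks of
`|Z|/u` consecutive ranks and keep, in each block, only the least and the greatest witness: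
at most `2u` witnesses remain, and a gap between kept witnesses either avoids `LX ++ LY`
altogether or lies strictly inside one block.
-/

/-- `X` is `u`-sorted with witness list `L`: `L` is a sorted sublist of `X` of at most
`20u` elements, each element of `L` splits `X` into smaller-before / larger-after, and
every segment of `X` determined by consecutive elements of `L` (or the boundary
segments) has at most `|X|/u` elements. -/
def USorted (u : ℕ) (X L : List ℝ) : Prop :=
  L.Sublist X ∧ L.Pairwise (· < ·) ∧ L.length ≤ 20 * u ∧
  (∀ a ∈ L, ∃ p q, X = p ++ a :: q ∧ (∀ y ∈ p, y < a) ∧ (∀ y ∈ q, a < y)) ∧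
  (L = [] → (X.length : ℝ) ≤ (X.length : ℝ) / u) ∧
  (∀ a L', L = a :: L' →
    ((X.countP fun y => decide (y < a)) : ℝ) ≤ (X.length : ℝ) / u) ∧
  (∀ a L', L = L' ++ [a] →
    ((X.countP fun y => decide (a < y)) : ℝ) ≤ (X.length : ℝ) / u) ∧
  (∀ L₁ a b L₂, L = L₁ ++ a :: b :: L₂ →
    ((X.countP fun y => decide (a < y ∧ y < b)) : ℝ) ≤ (X.length : ℝ) / u)

namespace Set.OrdConnected

variable {α : Type*} [LinearOrder α] {s : Set α}

theorem forall_lt_or_forall_gt (hs : s.OrdConnected) {c : α} (hc : c ∉ s) :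
    (∀ x ∈ s, c < x) ∨ ∀ x ∈ s, x < c := by
  by_contra! h
  obtain ⟨⟨x, hx, hxc⟩, y, hy, hcy⟩ := h
  exact hc (hs.out hx hy ⟨hxc, hcy⟩)

theorem subset_Ioo (hs : s.OrdConnected) {a b m : α} (ha : a ∉ s) (hb : b ∉ s) (ham : a ≤ m)
    (hmb : m ≤ b) (hm : m ∈ s) : s ⊆ Ioo a b := fun x hx =>
  ⟨(hs.forall_lt_or_forall_gt ha).resolve_right (fun h => (h m hm).not_ge ham) x hx,
    (hs.forall_lt_or_forall_gt hb).resolve_left (fun h => (h m hm).not_ge hmb) x hx⟩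

end Set.OrdConnected

namespace List

variable {α : Type*}

theorem countP_add_countP_le {l : List α} {p q r : α → Bool} (hp : ∀ x ∈ l, p x → r x)
    (hq : ∀ x ∈ l, q x → r x) (hpq : ∀ x ∈ l, p x → ¬q x) :
    l.countP p + l.countP q ≤ l.countP r := by
  induction l with
  | nil => simp
  | cons z t ih =>
    simp only [forall_mem_cons] at hp hq hpq
    have := ih hp.2 hq.2 hpq.2
    simp only [countP_cons]
    by_cases hpz : p z <;> by_cases hqz : q z <;> simp_all <;> omega

variable [LinearOrder α]

theorem countP_lt_add_countP_Ioo_add_one_le {Z : List α} {a b : α} (ha : a ∈ Z) (hab : a < b) :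
    Z.countP (· < a) + Z.countP (fun y => a < y ∧ y < b) + 1 ≤ Z.countP (· < b) := by
  have key : ∀ l : List α,
      l.countP (· < a) + l.countP (fun y => a < y ∧ y < b) ≤ l.countP (· < b) := fun l =>
    countP_add_countP_le (by simpa using fun _ _ h => h.trans hab) (by simp +contextual)
      (by simpa using fun _ _ h h' => (lt_asymm h h').elim)
  obtain ⟨s, t, rfl⟩ := append_of_mem ha
  have := key s
  have := key t
  simp only [countP_append, countP_cons, lt_irrefl, hab, decide_false, decide_true,
    and_true, Bool.false_eq_true, if_false, if_true]
  omega

theorem Pairwise.exists_eq_append_cons {Z : List α} (hZ : Z.Pairwise (· < ·)) {a : α}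
    (ha : a ∈ Z) : ∃ p q, Z = p ++ a :: q ∧ (∀ y ∈ p, y < a) ∧ ∀ y ∈ q, a < y := by
  obtain ⟨p, q, rfl⟩ := append_of_mem ha
  rw [pairwise_append, pairwise_cons] at hZ
  exact ⟨p, q, rfl, fun y hy => hZ.2.2 y hy a mem_cons_self, hZ.2.1.1⟩

theorem Pairwise.exists_eq_append_of_ordConnected {L : List α}
    (hL : L.Pairwise (· < ·)) {s : Set α} (hs : s.OrdConnected) (hLs : ∀ c ∈ L, c ∉ s) :
    ∃ L₁ L₂, L = L₁ ++ L₂ ∧ (∀ c ∈ L₁, ∀ x ∈ s, c < x) ∧ ∀ d ∈ L₂, ∀ x ∈ s, x < d := by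
  induction L with
  | nil => exact ⟨[], [], rfl, by simp, by simp⟩
  | cons c t ih =>
    rw [pairwise_cons] at hL
    rcases hs.forall_lt_or_forall_gt (hLs c mem_cons_self) with hc | hc
    · obtain ⟨L₁, L₂, rfl, h₁, h₂⟩ := ih hL.2 fun d hd => hLs d (mem_cons_of_mem c hd)
      exact ⟨c :: L₁, L₂, rfl, by simpa using ⟨hc, h₁⟩, h₂⟩
    · refine ⟨[], c :: t, rfl, by simp, ?_⟩
      simpa using ⟨hc, fun d hd x hx => (hc x hx).trans (hL.1 d hd)⟩

def blockIndex (Z : List α) (u : ℕ) (x : α) : ℕ := Z.countP (· < x) * u / Z.length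

section

variable {Z : List α} {u : ℕ}

theorem blockIndex_lt (hu : 0 < u) {x : α} (hx : x ∈ Z) : Z.blockIndex u x < u := by
  have hrank : Z.countP (· < x) < Z.length := by
    rw [countP_eq_length_filter, length_filter_lt_length_iff_exists]
    exact ⟨x, hx, by simp⟩
  rw [blockIndex, Nat.div_lt_iff_lt_mul (length_pos_of_mem hx), mul_comm u]
  exact Nat.mul_lt_mul_of_pos_right hrank hu

theorem countP_Ioo_mul_lt_length {a b : α} (ha : a ∈ Z) (hab : a < b)
    (h : Z.blockIndex u a = Z.blockIndex u b) :
    Z.countP (fun y => a < y ∧ y < b) * u < Z.length := by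
  have hrank := Nat.mul_le_mul_right u (countP_lt_add_countP_Ioo_add_one_le ha hab)
  have ha' : Z.blockIndex u a * Z.length ≤ Z.countP (· < a) * u := Nat.div_mul_le_self _ _
  have hb' : Z.countP (· < b) * u < (Z.blockIndex u b + 1) * Z.length :=
    Nat.lt_mul_of_div_lt (Nat.lt_succ_self _) (length_pos_of_mem ha)
  rw [h] at ha'
  nlinarith

end

section

variable {α β : Type*} [LinearOrder α] [DecidableEq β]

def blockExtremes (Z : List α) (b : α → β) (S : List α) : List α :=
  Z.filter fun m => m ∈ S ∧ ((∀ m' ∈ S, b m' = b m → m ≤ m') ∨ ∀ m' ∈ S, b m' = b m → m' ≤ m)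

variable {b : α → β} {S Z : List α}

@[simp]
theorem mem_blockExtremes {m : α} : m ∈ Z.blockExtremes b S ↔
    m ∈ Z ∧ m ∈ S ∧ ((∀ m' ∈ S, b m' = b m → m ≤ m') ∨ ∀ m' ∈ S, b m' = b m → m' ≤ m) := by
  simp [blockExtremes]

theorem blockExtremes_sublist : (Z.blockExtremes b S).Sublist Z := filter_sublist

theorem exists_mem_blockExtremes_le (hSZ : S ⊆ Z) {m : α} (hm : m ∈ S) :
    ∃ f ∈ Z.blockExtremes b S, f ≤ m ∧ b f = b m := by
  obtain ⟨f, hf, hmin⟩ :=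
    {x ∈ S.toFinset | b x = b m}.exists_min_image id ⟨m, by simp [hm]⟩
  simp only [Finset.mem_filter, mem_toFinset, id, and_imp] at hf hmin
  exact ⟨f, mem_blockExtremes.2 ⟨hSZ hf.1, hf.1, .inl fun m' hm' h => hmin m' hm' (h.trans hf.2)⟩,
    hmin m hm rfl, hf.2⟩

theorem exists_mem_blockExtremes_ge (hSZ : S ⊆ Z) {m : α} (hm : m ∈ S) :
    ∃ g ∈ Z.blockExtremes b S, m ≤ g ∧ b g = b m := by
  obtain ⟨g, hg, hmax⟩ :=
    {x ∈ S.toFinset | b x = b m}.exists_max_image id ⟨m, by simp [hm]⟩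
  simp only [Finset.mem_filter, mem_toFinset, id, and_imp] at hg hmax
  exact ⟨g, mem_blockExtremes.2 ⟨hSZ hg.1, hg.1, .inr fun m' hm' h => hmax m' hm' (h.trans hg.2)⟩,
    hmax m hm rfl, hg.2⟩

theorem length_blockExtremes_le (hZ : Z.Nodup) {T : Finset β} (hT : ∀ m ∈ Z, b m ∈ T) :
    (Z.blockExtremes b S).length ≤ 2 * T.card := by
  set K := Z.blockExtremes b S
  let e : α → β × Bool := fun m => (b m, decide (∀ m' ∈ S, b m' = b m → m ≤ m'))
  have hK : (K.map e).Nodup := by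
    refine (hZ.sublist blockExtremes_sublist).map_on fun x hx y hy hxy => ?_
    simp only [e, Prod.mk.injEq, decide_eq_decide] at hxy
    obtain ⟨-, hxS, hx⟩ := mem_blockExtremes.1 hx
    obtain ⟨-, hyS, hy⟩ := mem_blockExtremes.1 hy
    by_cases hmin : ∀ m' ∈ S, b m' = b x → x ≤ m'
    · exact le_antisymm (hmin y hyS hxy.1.symm) ((hxy.2.1 hmin) x hxS hxy.1)
    · have hmin' := mt hxy.2.2 hmin
      exact le_antisymm ((hy.resolve_left hmin') x hxS hxy.1)
        ((hx.resolve_left hmin) y hyS hxy.1.symm)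
  have hsub : (K.map e).toFinset ⊆ T ×ˢ Finset.univ := fun p hp => by
    obtain ⟨m, hm, rfl⟩ := mem_map.1 (mem_toFinset.1 hp)
    exact Finset.mem_product.2 ⟨hT m (blockExtremes_sublist.subset hm), Finset.mem_univ _⟩
  have := Finset.card_le_card hsub
  rw [toFinset_card_of_nodup hK, length_map, Finset.card_product, Finset.card_univ,
    Fintype.card_bool] at this
  omega

end

end List

/-- An order-convex set of values avoiding `L` lies within one of the segments into which `L`
cuts the values, so this single condition packs the four segment bounds of `USorted`. -/
def GapBounded (u : ℕ) (X L : List ℝ) : Prop :=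
  ∀ (p : ℝ → Prop) [DecidablePred p], {x | p x}.OrdConnected → (∀ c ∈ L, ¬p c) →
    ((X.countP fun y => decide (p y)) : ℝ) ≤ X.length / u

open List Set

section

variable {u : ℕ} {X Y L L' : List ℝ}

theorem USorted.gapBounded (h : USorted u X L) : GapBounded u X L := by
  obtain ⟨-, hsort, -, -, hnil, hhead, hlast, hmid⟩ := h
  intro p _ hp hLp
  obtain ⟨L₁, L₂, rfl, h₁, h₂⟩ := hsort.exists_eq_append_of_ordConnected hp hLp
  have mono : ∀ (q : ℝ → Prop) [DecidablePred q], (∀ x, p x → q x) →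
      ((X.countP fun y => decide (p y)) : ℝ) ≤ X.countP fun y => decide (q y) := fun q _ hq => by
    exact_mod_cast countP_mono_left fun x _ h => by simpa using hq x (by simpa using h)
  rcases L₁.eq_nil_or_concat' with rfl | ⟨L₁, c, rfl⟩ <;> rcases L₂ with _ | ⟨d, L₂⟩
  · exact (Nat.cast_le.2 countP_le_length).trans (hnil rfl)
  · exact (mono (· < d) fun x hx => h₂ d mem_cons_self x hx).trans (hhead d L₂ rfl)
  · exact (mono (c < ·) fun x hx => h₁ c (by simp) x hx).trans (hlast c L₁ (by simp))
  · exact (mono (fun y => c < y ∧ y < d) fun x hx =>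
      ⟨h₁ c (by simp) x hx, h₂ d (by simp) x hx⟩).trans (hmid L₁ c d L₂ (by simp))

theorem uSorted_iff : USorted u X L ↔ L.Sublist X ∧ L.Pairwise (· < ·) ∧ L.length ≤ 20 * u ∧
    (∀ a ∈ L, ∃ p q, X = p ++ a :: q ∧ (∀ y ∈ p, y < a) ∧ (∀ y ∈ q, a < y)) ∧
    GapBounded u X L := by
  refine ⟨fun h => ⟨h.1, h.2.1, h.2.2.1, h.2.2.2.1, h.gapBounded⟩, ?_⟩
  rintro ⟨hsub, hsort, hlen, hsplit, hgap⟩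
  refine ⟨hsub, hsort, hlen, hsplit, ?_, ?_, ?_, ?_⟩
  · rintro rfl
    simpa using hgap (fun _ => True) ordConnected_univ (by simp)
  · rintro a L rfl
    refine hgap (· < a) ordConnected_Iio fun c hc hca => ?_
    simp only [pairwise_cons] at hsort
    grind
  · rintro a L rfl
    refine hgap (a < ·) ordConnected_Ioi fun c hc hac => ?_
    simp only [pairwise_append, pairwise_cons] at hsort
    grind
  · rintro L₁ a b L₂ rfl
    refine hgap (fun y => a < y ∧ y < b) ordConnected_Ioo fun c hc hac => ?_
    simp only [pairwise_append, pairwise_cons] at hsort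
    grind

theorem USorted.eq_nil_of_zero (h : USorted 0 X L) : X = [] ∧ L = [] := by
  obtain ⟨-, -, hlen, -, hnil, -⟩ := h
  have hL : L = [] := length_eq_zero_iff.1 (Nat.le_zero.1 hlen)
  have hX := hnil hL
  rw [Nat.cast_zero, div_zero] at hX
  exact ⟨length_eq_zero_iff.1 (by exact_mod_cast hX.antisymm (Nat.cast_nonneg _)), hL⟩

theorem GapBounded.append (hX : GapBounded u X L) (hY : GapBounded u Y L') :
    GapBounded u (X ++ Y) (L ++ L') := by
  intro p _ hp hLp
  simp only [mem_append] at hLp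
  rw [countP_append, length_append, Nat.cast_add, Nat.cast_add, add_div]
  exact add_le_add (hX p hp fun c hc => hLp c (.inl hc)) (hY p hp fun c hc => hLp c (.inr hc))

theorem GapBounded.perm (h : GapBounded u X L) (hXY : X.Perm Y) : GapBounded u Y L := by
  intro p _ hp hLp
  rw [← hXY.countP_eq, ← hXY.length_eq]
  exact h p hp hLp

theorem GapBounded.blockExtremes {Z S : List ℝ} (hu : 0 < u) (hSZ : S ⊆ Z)
    (h : GapBounded u Z S) : GapBounded u Z (Z.blockExtremes (Z.blockIndex u) S) := by
  intro p _ hp hKp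
  by_cases hSp : ∃ m ∈ S, p m
  · obtain ⟨m, hmS, hm⟩ := hSp
    obtain ⟨f, hfK, hfm, hfb⟩ := exists_mem_blockExtremes_le (b := Z.blockIndex u) hSZ hmS
    obtain ⟨g, hgK, hmg, hgb⟩ := exists_mem_blockExtremes_ge (b := Z.blockIndex u) hSZ hmS
    have hpfg := hp.subset_Ioo (hKp f hfK) (hKp g hgK) hfm hmg hm
    have hblock := countP_Ioo_mul_lt_length (mem_of_mem_filter hfK)
      ((hpfg hm).1.trans (hpfg hm).2) (hfb.trans hgb.symm)
    rw [le_div_iff₀ (Nat.cast_pos.2 hu)]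
    calc ((Z.countP fun y => decide (p y)) : ℝ) * u
        ≤ (Z.countP fun y => decide (f < y ∧ y < g)) * u := by
          gcongr
          exact countP_mono_left fun x _ hx => by simpa using hpfg (of_decide_eq_true hx)
      _ ≤ Z.length := by exact_mod_cast hblock.le
  · push Not at hSp
    exact h p hp hSp

theorem uSorted_blockExtremes {Z S : List ℝ} (hu : 0 < u) (hZ : Z.Pairwise (· < ·))
    (hSZ : S ⊆ Z) (h : GapBounded u Z S) : USorted u Z (Z.blockExtremes (Z.blockIndex u) S) := by
  have hlen := length_blockExtremes_le (b := Z.blockIndex u) (S := S) (T := Finset.range u)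
    hZ.nodup fun m hm => Finset.mem_range.2 (blockIndex_lt hu hm)
  rw [Finset.card_range] at hlen
  refine uSorted_iff.2 ⟨blockExtremes_sublist, hZ.sublist blockExtremes_sublist, by omega,
    fun a ha => hZ.exists_eq_append_cons (mem_of_mem_filter ha), h.blockExtremes hu hSZ⟩

end

/-- Two `u`-sorted arrays can be merged: there is a permutation `Z` of the multiset
`X ∪ Y` together with a witness list `L_Z ⊆ L_X ∪ L_Y` making `Z` `u`-sorted. -/
theorem stmt8 (u : ℕ) (X Y LX LY : List ℝ) (hnd : (X ++ Y).Nodup)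
    (hX : USorted u X LX) (hY : USorted u Y LY) :
    ∃ Z LZ : List ℝ, Z.Perm (X ++ Y) ∧ (∀ a ∈ LZ, a ∈ LX ++ LY) ∧
      USorted u Z LZ := by
  obtain rfl | hu := Nat.eq_zero_or_pos u
  · obtain ⟨rfl, rfl⟩ := hX.eq_nil_of_zero
    obtain ⟨rfl, rfl⟩ := hY.eq_nil_of_zero
    exact ⟨[], [], .nil, by simp, hX⟩
  set Z := (X ++ Y).insertionSort (· ≤ ·)
  have hZ : Z.Perm (X ++ Y) := perm_insertionSort _ _
  have hZsort : Z.Pairwise (· < ·) :=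
    ((pairwise_insertionSort _ _).and (hZ.nodup_iff.2 hnd)).imp fun h => lt_of_le_of_ne h.1 h.2
  have hSZ : LX ++ LY ⊆ Z := fun a ha => hZ.symm.subset ((hX.1.append hY.1).subset ha)
  exact ⟨Z, Z.blockExtremes (Z.blockIndex u) (LX ++ LY), hZ,
    fun a ha => (mem_blockExtremes.1 ha).2.1,
    uSorted_blockExtremes hu hZsort hSZ ((hX.gapBounded.append hY.gapBounded).perm hZ.symm)⟩
end

section
/- With n_curr active elements across ℓ arrays, ℓ ≤ n_curr/32, Δ = ⌊n_curr/(32ℓ)⌋, block counts u_i = 4 + ⌈(r_i − l_i + 1)/Δ⌉ and block sizes ν_i ≤ ⌈(r_i − l_i + 1)/u_i⌉, the total rank uncertainty satisfies Σᵢ ν_i ≤ ℓ + ℓΔ ≤ n_curr/16. -/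
/-! With `mᵢ = rᵢ - lᵢ + 1`, the bound `uᵢ ≥ ⌈mᵢ/Δ⌉` means `mᵢ ≤ Δ uᵢ`, so each block size
`⌈mᵢ/uᵢ⌉` is at most `Δ` and `Σ νᵢ ≤ ℓΔ`; and `ℓ ≤ n/32`, `ℓΔ = ℓ⌊n/(32ℓ)⌋ ≤ n/32` give `ℓ + ℓΔ ≤ n/16`. -/

theorem ceilDiv_le_of_ceilDiv_le {α : Type*} [CommSemiring α] [LinearOrder α] [CeilDiv α α]
    {a b c : α} (ha : 0 < a) (h : b ⌈/⌉ a ≤ c) : b ⌈/⌉ c ≤ a := by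
  rcases le_or_gt c 0 with hc | hc
  · simpa [ceilDiv_of_nonpos hc] using ha.le
  · rw [ceilDiv_le_iff_le_mul hc, mul_comm]
    exact (ceilDiv_le_iff_le_mul ha).mp h

theorem Nat.mul_div_mul_le_div (ℓ n k : ℕ) : ℓ * (n / (k * ℓ)) ≤ n / k := by
  rw [Nat.mul_comm k, ← Nat.div_div_eq_div_mul]
  calc ℓ * (n / ℓ / k) ≤ ℓ * (n / ℓ) / k := Nat.mul_div_le_mul_div_assoc _ _ _
    _ ≤ n / k := Nat.div_le_div_right (Nat.mul_div_le _ _)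

theorem stmt10_general (ℓ ncurr : ℕ) (l r : Fin ℓ → ℕ)
    (h32 : 32 * ℓ ≤ ncurr)
    (Δ : ℕ) (hΔ : Δ = ncurr / (32 * ℓ))
    (u ν : Fin ℓ → ℕ)
    (hu : ∀ i, u i = 4 + (r i - l i + 1 + Δ - 1) / Δ)
    (hν : ∀ i, ν i ≤ (r i - l i + 1 + u i - 1) / u i) :
    (∑ i, ν i ≤ ℓ + ℓ * Δ) ∧ ((ℓ + ℓ * Δ : ℕ) : ℝ) ≤ (ncurr : ℝ) / 16 := by
  have hν_le : ∀ i, ν i ≤ Δ := fun i ↦ by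
    have hΔ_pos : 0 < Δ := hΔ ▸ Nat.div_pos h32 (by have := i.pos; positivity)
    refine (hν i).trans (ceilDiv_le_of_ceilDiv_le (b := r i - l i + 1) hΔ_pos ?_)
    rw [hu i]
    exact Nat.le_add_left _ _
  refine ⟨?_, ?_⟩
  · calc ∑ i, ν i ≤ ∑ _i : Fin ℓ, Δ := Finset.sum_le_sum fun i _ ↦ hν_le i
      _ = ℓ * Δ := by simp
      _ ≤ ℓ + ℓ * Δ := Nat.le_add_left _ _
  · have hℓΔ : ℓ * Δ ≤ ncurr / 32 := hΔ ▸ Nat.mul_div_mul_le_div ℓ ncurr 32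
    have h16 : ℓ + ℓ * Δ ≤ ncurr / 16 := by omega
    calc ((ℓ + ℓ * Δ : ℕ) : ℝ) ≤ ((ncurr / 16 : ℕ) : ℝ) := by exact_mod_cast h16
      _ ≤ (ncurr : ℝ) / 16 := Nat.cast_div_le

/-- With `n_curr` active elements across `ℓ` arrays, `32ℓ ≤ n_curr`,
`Δ = ⌊n_curr/(32ℓ)⌋`, `uᵢ = 4 + ⌈(rᵢ-lᵢ+1)/Δ⌉` and `νᵢ ≤ ⌈(rᵢ-lᵢ+1)/uᵢ⌉`,
the total rank uncertainty satisfies `Σ νᵢ ≤ ℓ + ℓΔ ≤ n_curr/16`. -/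
theorem stmt10 (ℓ ncurr : ℕ) (hℓ : 0 < ℓ) (l r : Fin ℓ → ℕ)
    (hlr : ∀ i, l i ≤ r i)
    (hsum : ∑ i, (r i - l i + 1) = ncurr)
    (h32 : 32 * ℓ ≤ ncurr)
    (Δ : ℕ) (hΔ : Δ = ncurr / (32 * ℓ))
    (u ν : Fin ℓ → ℕ)
    (hu : ∀ i, u i = 4 + (r i - l i + 1 + Δ - 1) / Δ)
    (hν : ∀ i, ν i ≤ (r i - l i + 1 + u i - 1) / u i) :
    (∑ i, ν i ≤ ℓ + ℓ * Δ) ∧ ((ℓ + ℓ * Δ : ℕ) : ℝ) ≤ (ncurr : ℝ) / 16 :=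
  stmt10_general ℓ ncurr l r h32 Δ hΔ u ν hu hν
end
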